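/- Let A and B be C*-algebras with saturated ℤ-gradings {A_n} and {B_n}, and let S_n = { a ⊗ b : a ∈ A_n, b ∈ B_n }. Then the C*-subalgebra of A ⊗ B generated by S_1 contains S_n for every n ∈ ℤ, and hence equals the closed span of ⋃_n S_n. -/
import Mathlib

set_option linter.unusedSectionVars false
set_option linter.unnecessarySimpa false

open scoped CStarAlgebra

section Helpers

variable {A B E : Type*}
    [NormedRing A] [StarRing A] [CStarRing A] [NormedAlgebra ℂ A] [StarModule ℂ A]
    [CompleteSpace A]
    [NormedRing B] [StarRing B] [CStarRing B] [NormedAlgebra ℂ B] [StarModule ℂ B]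
    [CompleteSpace B]
    [NormedRing E] [StarRing E] [CStarRing E] [NormedAlgebra ℂ E] [StarModule ℂ E]
    [CompleteSpace E]

/-- Multiplicativity of the elementary tensor map. -/
lemma tensor_mul_tensor (φA : A →⋆ₙₐ[ℂ] E) (φB : B →⋆ₙₐ[ℂ] E)
    (hcomm : ∀ (a : A) (b : B), φA a * φB b = φB b * φA a)
    (a1 a2 : A) (b1 b2 : B) :
    φA (a1 * a2) * φB (b1 * b2) = (φA a1 * φB b1) * (φA a2 * φB b2) := by
  simp only [map_mul, mul_assoc]
  rw [← mul_assoc (φA a2), hcomm a2 b1, mul_assoc]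

/-- A bilinear membership property passes to topological closures. -/
lemma aux_bil_closure (φA : A →⋆ₙₐ[ℂ] E) (φB : B →⋆ₙₐ[ℂ] E)
    (T : Submodule ℂ E) (hT : IsClosed (T : Set E))
    (SA : Submodule ℂ A) (SB : Submodule ℂ B)
    (h : ∀ a ∈ SA, ∀ b ∈ SB, φA a * φB b ∈ T) :
    ∀ a ∈ SA.topologicalClosure, ∀ b ∈ SB.topologicalClosure, φA a * φB b ∈ T := by
  letI : CStarAlgebra A := {}
  letI : CStarAlgebra B := {}
  letI : CStarAlgebra E := {}
  have hφAc : Continuous φA := map_continuous φA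
  have hφBc : Continuous φB := map_continuous φB
  have step1 : ∀ a ∈ SA, ∀ b ∈ SB.topologicalClosure, φA a * φB b ∈ T := by
    intro a ha b hb
    let K : Submodule ℂ B :=
    { carrier := {y | φA a * φB y ∈ T}
      zero_mem' := by simp only [Set.mem_setOf_eq, map_zero, mul_zero]; exact zero_mem T
      add_mem' := fun {x y} hx hy => by
        simp only [Set.mem_setOf_eq, map_add, mul_add]; exact T.add_mem hx hy
      smul_mem' := fun c x hx => by
        simp only [Set.mem_setOf_eq, map_smul, mul_smul_comm]; exact T.smul_mem c hx }
    have hK : IsClosed (K : Set B) := hT.preimage (continuous_const.mul hφBc)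
    exact SB.topologicalClosure_minimal (fun y hy => h a ha y hy) hK hb
  intro a ha b hb
  let K : Submodule ℂ A :=
  { carrier := {x | φA x * φB b ∈ T}
    zero_mem' := by simp only [Set.mem_setOf_eq, map_zero, zero_mul]; exact zero_mem T
    add_mem' := fun {x y} hx hy => by
      simp only [Set.mem_setOf_eq, map_add, add_mul]; exact T.add_mem hx hy
    smul_mem' := fun c x hx => by
      simp only [Set.mem_setOf_eq, map_smul, smul_mul_assoc]; exact T.smul_mem c hx }
  have hK : IsClosed (K : Set A) := hT.preimage (hφAc.mul continuous_const)
  exact SA.topologicalClosure_minimal (fun x hx => step1 x hx b hb) hK ha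

/-- The topological closure of a multiplicatively closed submodule is multiplicatively closed. -/
lemma aux_mul_closure (V : Submodule ℂ E) (h : ∀ x ∈ V, ∀ y ∈ V, x * y ∈ V) :
    ∀ x ∈ V.topologicalClosure, ∀ y ∈ V.topologicalClosure, x * y ∈ V.topologicalClosure := by
  have hcl : IsClosed (V.topologicalClosure : Set E) := V.isClosed_topologicalClosure
  have step1 : ∀ x ∈ V, ∀ y ∈ V.topologicalClosure, x * y ∈ V.topologicalClosure := by
    intro x hx y hy
    let K : Submodule ℂ E :=
    { carrier := {y | x * y ∈ V.topologicalClosure}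
      zero_mem' := by simp only [Set.mem_setOf_eq, mul_zero]; exact zero_mem _
      add_mem' := fun {a b} ha hb => by
        simp only [Set.mem_setOf_eq, mul_add]; exact add_mem ha hb
      smul_mem' := fun c a ha => by
        simp only [Set.mem_setOf_eq, mul_smul_comm]; exact Submodule.smul_mem _ c ha }
    have hK : IsClosed (K : Set E) := hcl.preimage (continuous_const.mul continuous_id)
    have hle : V.topologicalClosure ≤ K := V.topologicalClosure_minimal
      (fun y hy => show x * y ∈ V.topologicalClosure from
        V.le_topologicalClosure (h x hx y hy)) hK
    exact hle hy
  intro x hx y hy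
  let K : Submodule ℂ E :=
  { carrier := {a | a * y ∈ V.topologicalClosure}
    zero_mem' := by simp only [Set.mem_setOf_eq, zero_mul]; exact zero_mem _
    add_mem' := fun {a b} ha hb => by
      simp only [Set.mem_setOf_eq, add_mul]; exact add_mem ha hb
    smul_mem' := fun c a ha => by
      simp only [Set.mem_setOf_eq, smul_mul_assoc]; exact Submodule.smul_mem _ c ha }
  have hK : IsClosed (K : Set E) := hcl.preimage (continuous_id.mul continuous_const)
  have hle : V.topologicalClosure ≤ K := V.topologicalClosure_minimal
    (fun a ha => show a * y ∈ V.topologicalClosure from step1 a ha y hy) hK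
  exact hle hx

/-- The span of a multiplicatively closed set is multiplicatively closed. -/
lemma aux_span_mul (U : Set E) (h : ∀ x ∈ U, ∀ y ∈ U, x * y ∈ U) :
    ∀ x ∈ Submodule.span ℂ U, ∀ y ∈ Submodule.span ℂ U, x * y ∈ Submodule.span ℂ U := by
  intro x hx
  induction hx using Submodule.span_induction with
  | mem x hxU =>
    intro y hy
    induction hy using Submodule.span_induction with
    | mem y hyU => exact Submodule.subset_span (h x hxU y hyU)
    | zero => simpa using zero_mem (Submodule.span ℂ U)
    | add a b _ _ iha ihb => simpa [mul_add] using add_mem iha ihb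
    | smul c a _ ih => simpa [mul_smul_comm] using Submodule.smul_mem _ c ih
  | zero => intro y hy; simpa using zero_mem (Submodule.span ℂ U)
  | add a b _ _ iha ihb =>
    intro y hy; simpa [add_mul] using add_mem (iha y hy) (ihb y hy)
  | smul c a _ ih =>
    intro y hy; simpa [smul_mul_assoc] using Submodule.smul_mem _ c (ih y hy)

/-- The closed span of a star-closed set is star-closed. -/
lemma aux_star_span_closure (U : Set E) (hU : ∀ x ∈ U, star x ∈ U) :
    ∀ x ∈ (Submodule.span ℂ U).topologicalClosure,
      star x ∈ (Submodule.span ℂ U).topologicalClosure := by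
  have hspan : ∀ x ∈ Submodule.span ℂ U, star x ∈ Submodule.span ℂ U := by
    intro x hx
    induction hx using Submodule.span_induction with
    | mem x hxU => exact Submodule.subset_span (hU x hxU)
    | zero => simpa using zero_mem (Submodule.span ℂ U)
    | add a b _ _ iha ihb => simpa [star_add] using add_mem iha ihb
    | smul c a _ ih => simpa [star_smul] using Submodule.smul_mem _ (star c) ih
  intro x hx
  have h1 : x ∈ closure ((Submodule.span ℂ U : Set E)) := hx
  have h2 : star x ∈ closure ((Submodule.span ℂ U : Set E)) :=
    map_mem_closure continuous_star h1 hspan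
  exact h2

end Helpers


/-- C*-subalgebra generated by `S_1` contains every `S_n` and equals the closed span of `⋃ n, S_n`.
Realize the (minimal) tensor product `A ⊗ B` inside a C*-algebra `E` via injective
*-homomorphisms `φA`, `φB` with commuting ranges, `a ⊗ b := φA a * φB b`.  With
`S_n = {a ⊗ b : a ∈ A_n, b ∈ B_n}`, the closed span of `S_n · S_m` equals the closed span
of `S_{n+m}`. -/
theorem generated_by_S1_eq_closedSpan_union
    {A B E : Type*}
    [NormedRing A] [StarRing A] [CStarRing A] [NormedAlgebra ℂ A] [StarModule ℂ A]
    [CompleteSpace A]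
    [NormedRing B] [StarRing B] [CStarRing B] [NormedAlgebra ℂ B] [StarModule ℂ B]
    [CompleteSpace B]
    [NormedRing E] [StarRing E] [CStarRing E] [NormedAlgebra ℂ E] [StarModule ℂ E]
    [CompleteSpace E]
    (φA : A →⋆ₙₐ[ℂ] E) (φB : B →⋆ₙₐ[ℂ] E)
    (hφA : Function.Injective φA) (hφB : Function.Injective φB)
    (hcomm : ∀ (a : A) (b : B), φA a * φB b = φB b * φA a)
    -- the ℤ-grading of `A`
    (As : ℤ → Submodule ℂ A)
    (hAclosed : ∀ n, IsClosed (As n : Set A))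
    (hAmul : ∀ n m : ℤ, ∀ a ∈ As n, ∀ b ∈ As m, a * b ∈ As (n + m))
    (hAstar : ∀ n : ℤ, ∀ a ∈ As n, star a ∈ As (-n))
    (hAspan : (⨆ n : ℤ, As n).topologicalClosure = ⊤)
    (hAsat : ∀ n m : ℤ,
      (Submodule.span ℂ {x : A | ∃ a ∈ As n, ∃ b ∈ As m, x = a * b}).topologicalClosure
        = As (n + m))
    -- the ℤ-grading of `B`
    (Bs : ℤ → Submodule ℂ B)
    (hBclosed : ∀ n, IsClosed (Bs n : Set B))
    (hBmul : ∀ n m : ℤ, ∀ a ∈ Bs n, ∀ b ∈ Bs m, a * b ∈ Bs (n + m))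
    (hBstar : ∀ n : ℤ, ∀ a ∈ Bs n, star a ∈ Bs (-n))
    (hBspan : (⨆ n : ℤ, Bs n).topologicalClosure = ⊤)
    (hBsat : ∀ n m : ℤ,
      (Submodule.span ℂ {x : B | ∃ a ∈ Bs n, ∃ b ∈ Bs m, x = a * b}).topologicalClosure
        = Bs (n + m))
    -- the matched-degree subspaces `S_n`
    (S : ℤ → Set E)
    (hS : ∀ n : ℤ, S n = {x : E | ∃ a ∈ As n, ∃ b ∈ Bs n, x = φA a * φB b})
    :
    (∀ n : ℤ, S n ⊆ ((NonUnitalStarAlgebra.adjoin ℂ (S 1)).topologicalClosure : Set E)) ∧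
      ((NonUnitalStarAlgebra.adjoin ℂ (S 1)).topologicalClosure : Set E)
        = ((Submodule.span ℂ (⋃ n : ℤ, S n)).topologicalClosure : Set E) := by
  set M := NonUnitalStarAlgebra.adjoin ℂ (S 1) with hM
  set T := M.topologicalClosure with hTdef
  have hTclosed : IsClosed (T : Set E) := M.isClosed_topologicalClosure
  let T' : Submodule ℂ E := T.toNonUnitalSubalgebra.toSubmodule
  have hT'coe : (T' : Set E) = (T : Set E) := rfl
  have hT'closed : IsClosed (T' : Set E) := hTclosed
  have h1 : S 1 ⊆ (T : Set E) := fun x hx =>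
    M.le_topologicalClosure (NonUnitalStarAlgebra.subset_adjoin ℂ _ hx)
  -- negation step
  have hneg : ∀ n : ℤ, S n ⊆ (T : Set E) → S (-n) ⊆ (T : Set E) := by
    intro n hP x hx
    rw [hS] at hx
    obtain ⟨a, ha, b, hb, rfl⟩ := hx
    have hstar : φA (star a) * φB (star b) ∈ S n := by
      rw [hS]
      exact ⟨star a, by simpa using hAstar (-n) a ha,
        star b, by simpa using hBstar (-n) b hb, rfl⟩
    have hmem : star (φA (star a) * φB (star b)) ∈ T := star_mem (hP hstar)
    have heq : star (φA (star a) * φB (star b)) = φA a * φB b := by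
      rw [star_mul, ← map_star, ← map_star, star_star, star_star, ← hcomm]
    rwa [heq] at hmem
  -- addition step
  have hadd : ∀ n m : ℤ, S n ⊆ (T : Set E) → S m ⊆ (T : Set E) →
      S (n + m) ⊆ (T : Set E) := by
    intro n m hPn hPm x hx
    rw [hS] at hx
    obtain ⟨a, ha, b, hb, rfl⟩ := hx
    have hgen : ∀ p ∈ {x : A | ∃ a ∈ As n, ∃ b ∈ As m, x = a * b},
        ∀ q ∈ {x : B | ∃ a ∈ Bs n, ∃ b ∈ Bs m, x = a * b}, φA p * φB q ∈ T' := by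
      rintro p ⟨a1, ha1, a2, ha2, rfl⟩ q ⟨b1, hb1, b2, hb2, rfl⟩
      have hx1 : φA a1 * φB b1 ∈ T := hPn (by rw [hS]; exact ⟨a1, ha1, b1, hb1, rfl⟩)
      have hx2 : φA a2 * φB b2 ∈ T := hPm (by rw [hS]; exact ⟨a2, ha2, b2, hb2, rfl⟩)
      rw [tensor_mul_tensor φA φB hcomm a1 a2 b1 b2]
      exact T.mul_mem hx1 hx2
    have hspan2 : ∀ p ∈ Submodule.span ℂ {x : A | ∃ a ∈ As n, ∃ b ∈ As m, x = a * b},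
        ∀ q ∈ Submodule.span ℂ {x : B | ∃ a ∈ Bs n, ∃ b ∈ Bs m, x = a * b},
        φA p * φB q ∈ T' := by
      intro p hp
      induction hp using Submodule.span_induction with
      | mem p hpmem =>
        intro q hq
        induction hq using Submodule.span_induction with
        | mem q hqmem => exact hgen p hpmem q hqmem
        | zero => simpa using zero_mem T'
        | add x y _ _ ihx ihy => simpa [map_add, mul_add] using add_mem ihx ihy
        | smul c x _ ih => simpa [map_smul, mul_smul_comm] using Submodule.smul_mem T' c ih
      | zero => intro q hq; simpa using zero_mem T'
      | add x y _ _ ihx ihy =>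
        intro q hq; simpa [map_add, add_mul] using add_mem (ihx q hq) (ihy q hq)
      | smul c x _ ih =>
        intro q hq; simpa [map_smul, smul_mul_assoc] using Submodule.smul_mem T' c (ih q hq)
    have haa : a ∈ (Submodule.span ℂ
        {x : A | ∃ a ∈ As n, ∃ b ∈ As m, x = a * b}).topologicalClosure := by
      rw [hAsat n m]; exact ha
    have hbb : b ∈ (Submodule.span ℂ
        {x : B | ∃ a ∈ Bs n, ∃ b ∈ Bs m, x = a * b}).topologicalClosure := by
      rw [hBsat n m]; exact hb
    exact aux_bil_closure φA φB T' hT'closed _ _ hspan2 a haa b hbb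
  -- all n
  have hP : ∀ n : ℤ, S n ⊆ (T : Set E) := by
    have hm1 : S (-1) ⊆ (T : Set E) := hneg 1 h1
    have hnat : ∀ k : ℕ, S (k : ℤ) ⊆ (T : Set E) ∧ S (-(k : ℤ)) ⊆ (T : Set E) := by
      intro k
      induction k with
      | zero =>
        have h0 : S 0 ⊆ (T : Set E) := by
          have := hadd 1 (-1) h1 hm1
          simpa using this
        constructor <;> simpa using h0
      | succ k ih =>
        have hcast : ((k + 1 : ℕ) : ℤ) = (k : ℤ) + 1 := by push_cast; ring
        have hk1 : S ((k : ℤ) + 1) ⊆ (T : Set E) := hadd k 1 ih.1 h1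
        refine ⟨by rw [hcast]; exact hk1, ?_⟩
        rw [hcast]
        exact hneg _ hk1
    intro n
    obtain ⟨k, rfl | rfl⟩ := n.eq_nat_or_neg
    exacts [(hnat k).1, (hnat k).2]
  refine ⟨hP, ?_⟩
  -- the union and its span
  have hUstar : ∀ x ∈ ⋃ n : ℤ, S n, star x ∈ ⋃ n : ℤ, S n := by
    intro x hx
    obtain ⟨n, hx⟩ := Set.mem_iUnion.1 hx
    rw [hS] at hx
    obtain ⟨a, ha, b, hb, rfl⟩ := hx
    refine Set.mem_iUnion.2 ⟨-n, ?_⟩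
    rw [hS]
    refine ⟨star a, hAstar n a ha, star b, hBstar n b hb, ?_⟩
    rw [star_mul, ← map_star, ← map_star, ← hcomm]
  have hUmul : ∀ x ∈ ⋃ n : ℤ, S n, ∀ y ∈ ⋃ n : ℤ, S n, x * y ∈ ⋃ n : ℤ, S n := by
    intro x hx y hy
    obtain ⟨n, hx⟩ := Set.mem_iUnion.1 hx
    obtain ⟨m, hy⟩ := Set.mem_iUnion.1 hy
    rw [hS] at hx hy
    obtain ⟨a1, ha1, b1, hb1, rfl⟩ := hx
    obtain ⟨a2, ha2, b2, hb2, rfl⟩ := hy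
    refine Set.mem_iUnion.2 ⟨n + m, ?_⟩
    rw [hS]
    exact ⟨a1 * a2, hAmul n m a1 ha1 a2 ha2, b1 * b2, hBmul n m b1 hb1 b2 hb2,
      (tensor_mul_tensor φA φB hcomm a1 a2 b1 b2).symm⟩
  set V := Submodule.span ℂ (⋃ n : ℤ, S n) with hVdef
  have hVmul := aux_span_mul (⋃ n : ℤ, S n) hUmul
  have hVcmul := aux_mul_closure V hVmul
  let W : NonUnitalStarSubalgebra ℂ E :=
  { toNonUnitalSubalgebra :=
      V.topologicalClosure.toNonUnitalSubalgebra (fun x y hx hy => hVcmul x hx y hy)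
    star_mem' := fun {x} hx => aux_star_span_closure (⋃ n : ℤ, S n) hUstar x hx }
  have hWcoe : (W : Set E) = (V.topologicalClosure : Set E) := rfl
  have hsub1 : (T : Set E) ⊆ (V.topologicalClosure : Set E) := by
    have hadj : M ≤ W := by
      rw [hM]
      exact NonUnitalStarAlgebra.adjoin_le
        (fun x hx => V.le_topologicalClosure (Submodule.subset_span (Set.mem_iUnion.2 ⟨1, hx⟩)))
    have hle : T ≤ W :=
      M.topologicalClosure_minimal hadj
        (show IsClosed (W : Set E) from V.isClosed_topologicalClosure)
    exact fun x hx => hle hx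
  have hsub2 : (V.topologicalClosure : Set E) ⊆ (T : Set E) := by
    have hle : V ≤ T' := Submodule.span_le.2 (Set.iUnion_subset fun n => hP n)
    exact fun x hx => V.topologicalClosure_minimal hle hT'closed hx
  exact Set.Subset.antisymm hsub1 hsub2
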